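/- Let s, c, y₀ be real numbers with s > 0, suppose the discriminant (1 − 1/s)² − 4c/s is strictly positive, set Ξ = √((1 − 1/s)² − 4c/s), assume |2y₀ − (1 − 1/s)| < Ξ, and set Ω₀ = arctanh((2y₀ − (1 − 1/s))/Ξ). Define the tanh-formula T(t) = ½(1 − 1/s) + (Ξ/2)·tanh((sΞ/2)·t + Ω₀). Then T(0) = y₀ and T satisfies the Riccati differential equation T′(t) = (s − 1)·T(t) − s·T(t)² − c for all t ∈ ℝ. -/

import Mathlib

/-- The real inverse hyperbolic tangent, `arctanh x = ½ log((1+x)/(1-x))`,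
defined for `x ∈ (-1, 1)`. -/
noncomputable def arctanh (x : ℝ) : ℝ := (1 / 2) * Real.log ((1 + x) / (1 - x))

/-!
Completing the square, `(s - 1) y - s y² - c = s ((Ξ/2)² - (y - m)²)` with `m = ½(1 - 1/s)`,
so the Riccati equation becomes `y' = s ((Ξ/2)² - (y - m)²)`. Since `tanh' = 1 - tanh²`, the
function `m + (Ξ/2) tanh(s (Ξ/2) t + Ω₀)` solves it, and `Ω₀` is chosen so that its value at
`t = 0` is `y₀`.
-/

open Real Set

theorem Real.hasDerivAt_tanh (x : ℝ) : HasDerivAt tanh (1 - tanh x ^ 2) x := by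
  have hcosh : cosh x ≠ 0 := (cosh_pos x).ne'
  have h := (hasDerivAt_sinh x).div (hasDerivAt_cosh x) hcosh
  rw [show sinh / cosh = tanh from funext fun y => (tanh_eq_sinh_div_cosh y).symm] at h
  refine h.congr_deriv ?_
  rw [tanh_eq_sinh_div_cosh]
  field_simp

theorem hasDerivAt_const_add_mul_tanh (m A k Ω t : ℝ) :
    HasDerivAt (fun t => m + A * tanh (k * t + Ω)) (A * k * (1 - tanh (k * t + Ω) ^ 2)) t := by
  have hlin : HasDerivAt (fun t => k * t + Ω) k t := by
    simpa using ((hasDerivAt_id t).const_mul k).add_const Ω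
  have h := ((hasDerivAt_tanh (k * t + Ω)).comp t hlin).const_mul A |>.const_add m
  exact h.congr_deriv (by ring)

theorem arctanh_eq_artanh {x : ℝ} (hx : x ∈ Icc (-1) 1) : arctanh x = artanh x :=
  (artanh_eq_half_log hx).symm

theorem tanh_arctanh {x : ℝ} (hx : x ∈ Ioo (-1) 1) : tanh (arctanh x) = x := by
  rw [arctanh_eq_artanh (Ioo_subset_Icc_self hx), Real.tanh_artanh hx]

theorem riccati_rhs_eq_completed_square {s c Ξ : ℝ} (hs : s ≠ 0)
    (hΞ : Ξ ^ 2 = (1 - 1 / s) ^ 2 - 4 * c / s) (y : ℝ) :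
    (s - 1) * y - s * y ^ 2 - c = s * ((Ξ / 2) ^ 2 - (y - (1 / 2) * (1 - 1 / s)) ^ 2) := by
  rw [div_pow, hΞ]
  field_simp
  ring

/-- The tanh-formula `T(t) = ½(1 - 1/s) + (Ξ/2) tanh((sΞ/2)t + Ω₀)` satisfies
`T(0) = y₀` and the Riccati equation `T' = (s-1)T - sT² - c`. -/
theorem tanh_formula_solves_riccati (s c y₀ Ξ Ω₀ : ℝ) (hs : 0 < s)
    (hdisc : 0 < (1 - 1 / s) ^ 2 - 4 * c / s)
    (hΞ : Ξ = Real.sqrt ((1 - 1 / s) ^ 2 - 4 * c / s))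
    (hy₀ : |2 * y₀ - (1 - 1 / s)| < Ξ)
    (hΩ₀ : Ω₀ = arctanh ((2 * y₀ - (1 - 1 / s)) / Ξ))
    (T : ℝ → ℝ)
    (hT : ∀ t, T t = (1 / 2) * (1 - 1 / s) +
      (Ξ / 2) * Real.tanh ((s * Ξ / 2) * t + Ω₀)) :
    T 0 = y₀ ∧ ∀ t, HasDerivAt T ((s - 1) * T t - s * (T t) ^ 2 - c) t := by
  have hΞpos : 0 < Ξ := hΞ ▸ sqrt_pos.mpr hdisc
  have hΞsq : Ξ ^ 2 = (1 - 1 / s) ^ 2 - 4 * c / s := hΞ ▸ sq_sqrt hdisc.le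
  have harg_mem : (2 * y₀ - (1 - 1 / s)) / Ξ ∈ Ioo (-1) 1 := by
    rw [mem_Ioo, ← abs_lt, abs_div, abs_of_pos hΞpos, div_lt_one hΞpos]
    exact hy₀
  refine ⟨?_, fun t => ?_⟩
  · rw [hT, mul_zero, zero_add, hΩ₀, tanh_arctanh harg_mem]
    field_simp
    ring
  · rw [funext hT, riccati_rhs_eq_completed_square hs.ne' hΞsq]
    convert hasDerivAt_const_add_mul_tanh _ _ _ _ t using 1
    ring
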